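/- Fix μ ∈ ℝ and σ > 0. Then P(μ, σ, c) tends to 1 as c tends to -∞. -/
import Mathlib


open Real MeasureTheory Filter Topology

/-- Standard normal density φ(x) = exp(-x²/2)/√(2π). -/
noncomputable def stdPdf (x : ℝ) : ℝ := Real.exp (-(x ^ 2) / 2) / Real.sqrt (2 * Real.pi)

/-- Standard normal CDF Φ(x) = ∫_{-∞}^x φ(u) du. -/
noncomputable def stdCdf (x : ℝ) : ℝ := ∫ u in Set.Iio x, stdPdf u

/-- P(μ, σ, c): probability that an agent with prior N(μ, σ²) and link cost c
is never ostracized (Proposition 1). -/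
noncomputable def Pstay (μ σ c : ℝ) : ℝ :=
  ∫ q in Set.Ioi c, (1 - Real.exp (-(2 / σ ^ 2) * (μ - c) * (q - c))) * stdPdf ((q - μ) / σ) / σ

lemma stdPdf_eq (x : ℝ) : stdPdf x = Real.exp (-(1/2) * x ^ 2) / Real.sqrt (2 * Real.pi) := by
  unfold stdPdf; ring_nf

lemma integrable_stdPdf : Integrable stdPdf := by
  have h : Integrable (fun x : ℝ => Real.exp (-(1/2) * x ^ 2)) :=
    integrable_exp_neg_mul_sq (by norm_num)
  simpa only [← stdPdf_eq] using h.div_const (Real.sqrt (2 * Real.pi))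

lemma integral_stdPdf : ∫ x, stdPdf x = 1 := by
  simp_rw [stdPdf_eq, integral_div]
  rw [integral_gaussian]
  rw [show Real.pi / (1/2) = 2 * Real.pi by ring]
  exact div_self (by positivity)

/-- Integrability of the shifted/scaled gaussian. -/
lemma integrable_affine_stdPdf {σ : ℝ} (hσ : 0 < σ) (m : ℝ) :
    Integrable (fun q : ℝ => stdPdf ((q - m) / σ) / σ) := by
  have h1 : Integrable (fun q : ℝ => stdPdf (σ⁻¹ * q)) :=
    integrable_stdPdf.comp_mul_left' (by positivity)
  have h2 : Integrable (fun q : ℝ => stdPdf (σ⁻¹ * (q - m))) := h1.comp_sub_right m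
  have := h2.div_const σ
  refine this.congr (Filter.Eventually.of_forall fun q => ?_)
  simp only [div_eq_inv_mul]

/-- Change of variables for the affine gaussian integral on `Ioi`. -/
lemma integral_affine_stdPdf {σ : ℝ} (hσ : 0 < σ) (m c : ℝ) :
    ∫ q in Set.Ioi c, stdPdf ((q - m) / σ) / σ
      = ∫ u in Set.Ioi ((c - m) / σ), stdPdf u := by
  have hσ' : (0:ℝ) < σ⁻¹ := by positivity
  -- step 1 : translation
  have step1 : ∫ q in Set.Ioi c, stdPdf ((q - m) / σ) / σ
      = ∫ q in Set.Ioi (c - m), stdPdf (q / σ) / σ := by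
    rw [← integral_indicator measurableSet_Ioi, ← integral_indicator measurableSet_Ioi,
      ← integral_sub_right_eq_self
        (fun q => (Set.Ioi (c - m)).indicator (fun x => stdPdf (x / σ) / σ) q) m]
    congr 1 with x
    simp only [Set.indicator_apply, Set.mem_Ioi, sub_lt_sub_iff_right]
  -- step 2 : scaling
  rw [step1]
  simp_rw [integral_div, div_eq_inv_mul]
  rw [integral_comp_mul_left_Ioi stdPdf (c - m) hσ']
  rw [smul_eq_mul, inv_inv]
  rw [mul_comm σ⁻¹ (c - m)]
  field_simp

/-- Pointwise decomposition of the integrand of `Pstay`. -/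
lemma integrand_eq {σ : ℝ} (hσ : 0 < σ) (μ c q : ℝ) :
    (1 - Real.exp (-(2 / σ ^ 2) * (μ - c) * (q - c))) * stdPdf ((q - μ) / σ) / σ
      = stdPdf ((q - μ) / σ) / σ - stdPdf ((q - (2 * c - μ)) / σ) / σ := by
  have hσ' : σ ≠ 0 := ne_of_gt hσ
  have key : Real.exp (-(2 / σ ^ 2) * (μ - c) * (q - c)) * stdPdf ((q - μ) / σ)
      = stdPdf ((q - (2 * c - μ)) / σ) := by
    unfold stdPdf
    rw [mul_div_assoc', ← Real.exp_add]
    congr 1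
    field_simp
    ring
  rw [sub_mul, one_mul, sub_div, key]

theorem tendsto_integral_Ioi_stdPdf_atBot :
    Filter.Tendsto (fun a : ℝ => ∫ u in Set.Ioi a, stdPdf u) atBot (𝓝 1) := by
  rw [← integral_stdPdf]
  exact (MeasureTheory.aecover_Ioi (tendsto_id (α := ℝ))).integral_tendsto_of_countably_generated
    integrable_stdPdf

theorem tendsto_integral_Ioi_stdPdf_atTop :
    Filter.Tendsto (fun a : ℝ => ∫ u in Set.Ioi a, stdPdf u) atTop (𝓝 0) := by
  have h : Filter.Tendsto (fun a : ℝ => ∫ u in Set.Iic a, stdPdf u) atTop (𝓝 1) := by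
    rw [← integral_stdPdf]
    exact (MeasureTheory.aecover_Iic (tendsto_id (α := ℝ))).integral_tendsto_of_countably_generated
      integrable_stdPdf
  have heq : ∀ a : ℝ, ∫ u in Set.Ioi a, stdPdf u = 1 - ∫ u in Set.Iic a, stdPdf u := by
    intro a
    have := integral_add_compl (μ := volume) (measurableSet_Iic (a := a)) integrable_stdPdf
    rw [Set.compl_Iic] at this
    rw [← integral_stdPdf, ← this]
    ring
  simp_rw [heq]
  have := Filter.Tendsto.const_sub (1:ℝ) h
  simpa using this

/-- P(μ, σ, c) → 1 as c → -∞. -/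
theorem stmt_6 (μ σ : ℝ) (hσ : 0 < σ) :
    Tendsto (fun c : ℝ => Pstay μ σ c) atBot (𝓝 1) := by
  have hPeq : ∀ c : ℝ, Pstay μ σ c
      = (∫ u in Set.Ioi ((c - μ) / σ), stdPdf u)
        - ∫ u in Set.Ioi ((μ - c) / σ), stdPdf u := by
    intro c
    unfold Pstay
    have h1 : IntegrableOn (fun q : ℝ => stdPdf ((q - μ) / σ) / σ) (Set.Ioi c) :=
      (integrable_affine_stdPdf hσ μ).integrableOn
    have h2 : IntegrableOn (fun q : ℝ => stdPdf ((q - (2 * c - μ)) / σ) / σ) (Set.Ioi c) :=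
      (integrable_affine_stdPdf hσ (2 * c - μ)).integrableOn
    calc ∫ q in Set.Ioi c,
          (1 - Real.exp (-(2 / σ ^ 2) * (μ - c) * (q - c))) * stdPdf ((q - μ) / σ) / σ
        = ∫ q in Set.Ioi c,
            (stdPdf ((q - μ) / σ) / σ - stdPdf ((q - (2 * c - μ)) / σ) / σ) := by
          exact setIntegral_congr_fun measurableSet_Ioi fun q _ => integrand_eq hσ μ c q
      _ = (∫ q in Set.Ioi c, stdPdf ((q - μ) / σ) / σ)
            - ∫ q in Set.Ioi c, stdPdf ((q - (2 * c - μ)) / σ) / σ :=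
          integral_sub h1 h2
      _ = (∫ u in Set.Ioi ((c - μ) / σ), stdPdf u)
            - ∫ u in Set.Ioi ((μ - c) / σ), stdPdf u := by
          rw [integral_affine_stdPdf hσ μ c, integral_affine_stdPdf hσ (2 * c - μ) c]
          norm_num
          ring_nf
  simp_rw [hPeq]
  have hlin1 : Filter.Tendsto (fun c : ℝ => (c - μ) / σ) atBot atBot :=
    (tendsto_atBot_add_const_right _ (-μ) tendsto_id).atBot_div_const hσ
  have hlin2 : Filter.Tendsto (fun c : ℝ => (μ - c) / σ) atBot atTop := by
    apply Filter.Tendsto.atTop_div_const hσ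
    exact tendsto_atTop_add_const_left _ μ tendsto_neg_atBot_atTop
  have t1 := tendsto_integral_Ioi_stdPdf_atBot.comp hlin1
  have t2 := tendsto_integral_Ioi_stdPdf_atTop.comp hlin2
  have := t1.sub t2
  simpa using this
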